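/- arXiv:2007.08503 — 3 statements merged into one kernel-verified Lean document; each statement's English description precedes it below -/
import Mathlib

section
/- Let n ≥ 2 and 1 ≤ m ≤ n−1 be integers, let V be an m-dimensional linear subspace of ℝⁿ, let α ∈ [0,∞), let X = X(V,α), and let E ⊆ ℝⁿ be nonempty. Then there exists a Lipschitz function f : V → V⊥ with Lipschitz constant at most α such that E ⊆ Graph(f) if and only if E ∩ X_x = ∅ for every x ∈ E. -/
open MeasureTheory Metric Set
open scoped ENNReal NNReal

noncomputable section

abbrev E (n : ℕ) := EuclideanSpace ℝ (Fin n)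

/-- The bad cone `X(V,α) = {x : dist(x,V) > α · dist(x,V^⊥)}`. -/
def badCone {n : ℕ} (V : Submodule ℝ (E n)) (α : ℝ) : Set (E n) :=
  {x | α * Metric.infDist x (Vᗮ : Set (E n)) < Metric.infDist x (V : Set (E n))}

/-- The translated bad cone `X_x = x + X(V,α)`. -/
def badConeAt {n : ℕ} (V : Submodule ℝ (E n)) (α : ℝ) (x : E n) : Set (E n) :=
  {y | y - x ∈ badCone V α}

/-- `f` has Lipschitz constant at most `α`. -/
def LipBound {n : ℕ} (V : Submodule ℝ (E n)) (α : ℝ) (f : V → Vᗮ) : Prop :=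
  ∀ v w : V, dist (f v) (f w) ≤ α * dist v w

/-- The graph of `f : V → V^⊥`, as a subset of `ℝⁿ`. -/
def graphOf {n : ℕ} (V : Submodule ℝ (E n)) (f : V → Vᗮ) : Set (E n) :=
  {x | ∃ v : V, x = (v : E n) + (f v : E n)}

/-- A half-open dyadic cube, described by generation `k` and corner coordinates `j`. -/
structure DyadicCube (n : ℕ) where
  k : ℤ
  j : Fin n → ℤ

namespace DyadicCube

/-- Side length `2^{-k}`. -/
def side {n : ℕ} (Q : DyadicCube n) : ℝ := 2 ^ (-Q.k)

/-- The cube as a subset of `ℝⁿ`. -/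
def toSet {n : ℕ} (Q : DyadicCube n) : Set (E n) :=
  {x | ∀ i, (Q.j i : ℝ) * Q.side ≤ x i ∧ x i < ((Q.j i : ℝ) + 1) * Q.side}

/-- The geometric center of the cube. -/
def center {n : ℕ} (Q : DyadicCube n) : E n :=
  (EuclideanSpace.equiv (Fin n) ℝ).symm fun i => ((Q.j i : ℝ) + 1 / 2) * Q.side

/-- The diameter `√n · side Q`. -/
def diam {n : ℕ} (Q : DyadicCube n) : ℝ := Real.sqrt n * Q.side

end DyadicCube

/-- The radius `r_{Q,X} = 81 √n max(α,1/α) side Q`. -/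
def coneRadius {n : ℕ} (α : ℝ) (Q : DyadicCube n) : ℝ :=
  81 * Real.sqrt n * max α α⁻¹ * Q.side

/-- The conical annulus `A_{Q,X} = X_Q ∩ B̄(x_Q,r_{Q,X}) \ U(x_Q,r_{Q,X}/3)`. -/
def conAnnulus {n : ℕ} (V : Submodule ℝ (E n)) (α : ℝ) (Q : DyadicCube n) : Set (E n) :=
  ((⋃ x ∈ Q.toSet, badConeAt V α x) ∩ closedBall Q.center (coneRadius α Q)) \
    ball Q.center (coneRadius α Q / 3)

/-- The discretized conical annulus `Δ*_{Q,X}`. -/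
def discAnnulus {n : ℕ} (V : Submodule ℝ (E n)) (α : ℝ) (Q : DyadicCube n) :
    Set (DyadicCube n) :=
  {R | R.side = Q.side ∧ (R.toSet ∩ conAnnulus V α Q).Nonempty}

/-- The conical defect `Defect(μ,Q,X)`. -/
def defect {n : ℕ} (μ : Measure (E n)) (V : Submodule ℝ (E n)) (α : ℝ)
    (Q : DyadicCube n) : ℝ≥0∞ :=
  if μ Q.toSet = 0 then 0
  else ∑' R : discAnnulus V α Q, μ (R : DyadicCube n).toSet / μ Q.toSet

/-- The conical Dini function `G_{μ,X}(x)`. -/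
def dini {n : ℕ} (μ : Measure (E n)) (V : Submodule ℝ (E n)) (α : ℝ) (x : E n) : ℝ≥0∞ :=
  ∑' Q : {Q : DyadicCube n // Q.side ≤ 1 ∧ x ∈ Q.toSet}, defect μ V α Q.1

/-- `gap(S,T) = inf {|s-t| : s ∈ S, t ∈ T}` (with value `∞` if either set is empty). -/
def gap {n : ℕ} (S T : Set (E n)) : ℝ≥0∞ :=
  ⨅ (s : S) (t : T), edist (s : E n) (t : E n)

/-- `excess(S,T) = sup_{s∈S} inf_{t∈T} |s-t|` (with `excess(∅,T) = 0`). -/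
def excess {n : ℕ} (S T : Set (E n)) : ℝ≥0∞ :=
  ⨆ s : S, ⨅ t : T, edist (s : E n) (t : E n)

/-- `S` is a tree of dyadic cubes with top cube `top`. -/
def IsDyadicTree {n : ℕ} (S : Set (DyadicCube n)) (top : DyadicCube n) : Prop :=
  top ∈ S ∧ (∀ Q ∈ S, Q.toSet ⊆ top.toSet) ∧
    ∀ Q ∈ S, ∀ P : DyadicCube n, Q.toSet ⊆ P.toSet → P.toSet ⊆ top.toSet → P ∈ S

/-- The set of leaves of a family `S` of dyadic cubes with top cube `top`:
the union over infinite branches of the intersections along the branch. -/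
def leavesOf {n : ℕ} (top : DyadicCube n) (S : Set (DyadicCube n)) : Set (E n) :=
  {x | ∃ β : ℕ → DyadicCube n, (∀ i, β i ∈ S) ∧ (∀ i, (β i).k = top.k + i) ∧
    (∀ i, (β (i + 1)).toSet ⊆ (β i).toSet) ∧ ∀ i, x ∈ (β i).toSet}

/-- `Γ` is an `m`-dimensional Lipschitz graph in `ℝⁿ`. -/
def IsLipGraph (n m : ℕ) (Γ : Set (E n)) : Prop :=
  ∃ (V : Submodule ℝ (E n)) (f : V → Vᗮ) (L : ℝ),
    Module.finrank ℝ V = m ∧ 0 ≤ L ∧ LipBound V L f ∧ Γ = graphOf V f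

/-- `μ` is carried by `m`-dimensional Lipschitz graphs. -/
def CarriedByGraphs (n m : ℕ) (μ : Measure (E n)) : Prop :=
  ∃ Γ : ℕ → Set (E n), (∀ i, IsLipGraph n m (Γ i)) ∧ μ (univ \ ⋃ i, Γ i) = 0

/-- `μ` is singular to `m`-dimensional Lipschitz graphs. -/
def SingularToGraphs (n m : ℕ) (μ : Measure (E n)) : Prop :=
  ∀ Γ : Set (E n), IsLipGraph n m Γ → μ Γ = 0

/-!
Writing `P` and `P⊥` for the orthogonal projections onto `V` and `V⊥`, one has
`dist(z, V) = ‖P⊥ z‖` and `dist(z, V⊥) = ‖P z‖`, so both sides of the equivalence say that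
`‖P⊥ y - P⊥ x‖ ≤ α ‖P y - P x‖` for all `x, y ∈ E`: the set `E` is the graph of an
`α`-Lipschitz map from `P(E)` to `V⊥`. Kirszbraun's theorem extends this map to all of `V`
with the same constant.

Kirszbraun's theorem follows by Zorn's lemma from the extension to one new point `v`, and by
compactness of closed balls in `V⊥` it suffices to extend from finitely many points `sᵢ ↦ xᵢ`.
There one takes `y = ∑ cᵢ xᵢ` for `c` maximising
`ψ c = ∑ cᵢ (‖xᵢ‖² - α² ‖v - sᵢ‖²) - ‖∑ cᵢ xᵢ‖²` on the standard simplex: the variance identity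
shows `ψ ≤ 0` on the simplex, and optimality of `c` in the direction of each vertex `j` then
gives `‖y - xⱼ‖ ≤ α ‖v - sⱼ‖`.
-/

open scoped RealInnerProductSpace

theorem nonpos_of_forall_mul_le_sq_mul {L B : ℝ} (h : ∀ t ∈ Ioc (0 : ℝ) 1, t * L ≤ t ^ 2 * B) :
    L ≤ 0 := by
  by_contra! hL
  have hB : 0 < B := hL.trans_le (by simpa using h 1 ⟨one_pos, le_rfl⟩)
  set t := min 1 (L / (2 * B))
  have ht : 0 < t := by positivity
  have hLt : L ≤ t * B := le_of_mul_le_mul_left (by nlinarith [h t ⟨ht, min_le_left _ _⟩]) ht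
  have htB : t * B ≤ L / 2 := by
    calc t * B ≤ L / (2 * B) * B := by gcongr; exact min_le_right _ _
      _ = L / 2 := by field_simp
  linarith

section Kirszbraun

variable {F G : Type*} [NormedAddCommGroup F] [NormedAddCommGroup G]

def LipschitzRel (α : ℝ) (R : Set (F × G)) : Prop :=
  ∀ p ∈ R, ∀ q ∈ R, ‖p.2 - q.2‖ ≤ α * ‖p.1 - q.1‖

namespace LipschitzRel

variable {α : ℝ} {R : Set (F × G)}

theorem insert (hR : LipschitzRel α R) {v : F} {y : G}
    (hy : ∀ p ∈ R, ‖y - p.2‖ ≤ α * ‖v - p.1‖) : LipschitzRel α (insert (v, y) R) := by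
  rintro p (rfl | hp) q (rfl | hq)
  · simp
  · exact hy q hq
  · rw [norm_sub_rev, norm_sub_rev p.1]
    exact hy p hp
  · exact hR p hp q hq

theorem sUnion {C : Set (Set (F × G))} (hC : IsChain (· ⊆ ·) C)
    (h : ∀ R ∈ C, LipschitzRel α R) : LipschitzRel α (⋃₀ C) := by
  rintro p ⟨R, hR, hp⟩ q ⟨R', hR', hq⟩
  rcases hC.total hR hR' with hRR' | hR'R
  · exact h R' hR' p (hRR' hp) q hq
  · exact h R hR p hp q (hR'R hq)

end LipschitzRel

variable [InnerProductSpace ℝ F] [InnerProductSpace ℝ G] {ι : Type*} [Fintype ι]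

theorem sum_mul_norm_sq_sub_norm_sum_smul_sq (c : ι → ℝ) (hc : ∑ i, c i = 1) (x : ι → G) :
    ∑ i, c i * ‖x i‖ ^ 2 - ‖∑ i, c i • x i‖ ^ 2 =
      (1 / 2) * ∑ i, ∑ j, c i * c j * ‖x i - x j‖ ^ 2 := by
  have hsq : ‖∑ i, c i • x i‖ ^ 2 = ∑ i, ∑ j, c i * c j * ⟪x i, x j⟫ := by
    simp_rw [← real_inner_self_eq_norm_sq, sum_inner, inner_sum, real_inner_smul_left,
      real_inner_smul_right, mul_assoc]
  have hleft : ∑ i, ∑ j, c i * c j * ‖x i‖ ^ 2 = ∑ i, c i * ‖x i‖ ^ 2 := by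
    simp_rw [← Finset.sum_mul, ← Finset.mul_sum, hc, mul_one]
  have hright : ∑ i, ∑ j, c i * c j * ‖x j‖ ^ 2 = ∑ i, c i * ‖x i‖ ^ 2 := by
    simp_rw [mul_assoc, ← Finset.mul_sum, ← Finset.sum_mul, hc, one_mul]
  simp only [norm_sub_sq_real, mul_add, mul_sub, Finset.sum_add_distrib, Finset.sum_sub_distrib,
    hleft, hright, hsq, mul_left_comm _ (2 : ℝ), ← Finset.mul_sum]
  ring

theorem sum_mul_sub_norm_sum_smul_sq_nonpos {α : ℝ} {s : ι → F} {x : ι → G} (v : F)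
    (h : ∀ i j, ‖x i - x j‖ ≤ α * ‖s i - s j‖) {c : ι → ℝ} (hc : c ∈ stdSimplex ℝ ι) :
    ∑ i, c i * (‖x i‖ ^ 2 - α ^ 2 * ‖v - s i‖ ^ 2) - ‖∑ i, c i • x i‖ ^ 2 ≤ 0 := by
  have hx := sum_mul_norm_sq_sub_norm_sum_smul_sq c hc.2 x
  have hs := sum_mul_norm_sq_sub_norm_sum_smul_sq c hc.2 (fun i => v - s i)
  have hpair : ∑ i, ∑ j, c i * c j * ‖x i - x j‖ ^ 2 ≤
      α ^ 2 * ∑ i, ∑ j, c i * c j * ‖(v - s i) - (v - s j)‖ ^ 2 := by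
    simp_rw [Finset.mul_sum]
    refine Finset.sum_le_sum fun i _ => Finset.sum_le_sum fun j _ => ?_
    have hij : ‖x i - x j‖ ^ 2 ≤ α ^ 2 * ‖s i - s j‖ ^ 2 := by
      rw [← mul_pow]; exact pow_le_pow_left₀ (norm_nonneg _) (h i j) 2
    calc c i * c j * ‖x i - x j‖ ^ 2 ≤ c i * c j * (α ^ 2 * ‖s i - s j‖ ^ 2) :=
          mul_le_mul_of_nonneg_left hij (mul_nonneg (hc.1 i) (hc.1 j))
      _ = α ^ 2 * (c i * c j * ‖(v - s i) - (v - s j)‖ ^ 2) := by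
          rw [sub_sub_sub_cancel_left, norm_sub_rev]; ring
  have hs' := congrArg (α ^ 2 * ·) hs
  have hvar : 0 ≤ α ^ 2 * ‖∑ i, c i • (v - s i)‖ ^ 2 := by positivity
  simp only [mul_sub, Finset.sum_sub_distrib, mul_left_comm _ (α ^ 2), ← Finset.mul_sum]
  linarith

theorem exists_forall_norm_sub_le_of_fintype [Nonempty ι] {α : ℝ} (hα : 0 ≤ α) {s : ι → F}
    {x : ι → G} (h : ∀ i j, ‖x i - x j‖ ≤ α * ‖s i - s j‖) (v : F) :
    ∃ y : G, ∀ i, ‖y - x i‖ ≤ α * ‖v - s i‖ := by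
  classical
  set a : ι → ℝ := fun i => ‖x i‖ ^ 2 - α ^ 2 * ‖v - s i‖ ^ 2
  set ψ : (ι → ℝ) → ℝ := fun c => ∑ i, c i * a i - ‖∑ i, c i • x i‖ ^ 2
  have hψ : Continuous ψ := by fun_prop
  obtain ⟨c, hc, hmax⟩ := (isCompact_stdSimplex ℝ ι).exists_isMaxOn
    ⟨_, single_mem_stdSimplex ℝ (Classical.arbitrary ι)⟩ hψ.continuousOn
  set y := ∑ i, c i • x i
  have hψc : ψ c ≤ 0 := sum_mul_sub_norm_sum_smul_sq_nonpos v h hc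
  refine ⟨y, fun j => ?_⟩
  have hslope : a j - ∑ i, c i * a i - 2 * ⟪y, x j - y⟫ ≤ 0 := by
    refine nonpos_of_forall_mul_le_sq_mul (B := ‖x j - y‖ ^ 2) fun t ⟨ht0, ht1⟩ => ?_
    have hmem : (1 - t) • c + t • Pi.single j 1 ∈ stdSimplex ℝ ι :=
      convex_stdSimplex ℝ ι hc (single_mem_stdSimplex ℝ j) (by linarith) ht0.le (by ring)
    have hsum : ∑ i, ((1 - t) • c + t • Pi.single j 1 : ι → ℝ) i • x i = y + t • (x j - y) := by
      simp only [Pi.add_apply, Pi.smul_apply, smul_eq_mul, Pi.single_apply, mul_ite, mul_one,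
        mul_zero, add_smul, mul_smul, ite_smul, zero_smul, Finset.sum_add_distrib,
        ← Finset.smul_sum, Finset.sum_ite_eq', Finset.mem_univ, if_true, y]
      module
    have hlin : ∑ i, ((1 - t) • c + t • Pi.single j 1 : ι → ℝ) i * a i =
        ∑ i, c i * a i + t * (a j - ∑ i, c i * a i) := by
      simp only [Pi.add_apply, Pi.smul_apply, smul_eq_mul, add_mul, mul_assoc,
        Finset.sum_add_distrib, ← Finset.mul_sum, Pi.single_apply, ite_mul, one_mul, zero_mul,
        Finset.sum_ite_eq', Finset.mem_univ, if_true]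
      ring
    have hle : ψ ((1 - t) • c + t • Pi.single j 1) ≤ ψ c := hmax hmem
    simp only [ψ, hsum, hlin] at hle
    rw [norm_add_sq_real, norm_smul, real_inner_smul_right, mul_pow, Real.norm_eq_abs, sq_abs]
      at hle
    linarith
  have hxy : ‖x j - y‖ ^ 2 = ‖x j‖ ^ 2 - 2 * ⟪y, x j - y⟫ - ‖y‖ ^ 2 := by
    rw [norm_sub_sq_real, inner_sub_right, real_inner_self_eq_norm_sq, real_inner_comm]
    ring
  rw [← sq_le_sq₀ (norm_nonneg _) (by positivity), norm_sub_rev, mul_pow]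
  simp only [ψ, a] at hψc hslope
  linarith

namespace LipschitzRel

variable {α : ℝ} {R : Set (F × G)}

theorem exists_forall_norm_sub_le [FiniteDimensional ℝ G] (hα : 0 ≤ α)
    (hR : LipschitzRel α R) (v : F) : ∃ y : G, ∀ p ∈ R, ‖y - p.2‖ ≤ α * ‖v - p.1‖ := by
  rcases R.eq_empty_or_nonempty with rfl | ⟨p₀, hp₀⟩
  · exact ⟨0, by simp⟩
  let ball : R → Set G := fun p => closedBall (p : F × G).2 (α * ‖v - (p : F × G).1‖)
  -- the balls are compact, and any finitely many of them meet by the finite case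
  obtain ⟨y, -, hy⟩ := (isCompact_closedBall p₀.2 (α * ‖v - p₀.1‖)).inter_iInter_nonempty ball
    (fun _ => isClosed_closedBall) fun u => by
      let q : Option u → F × G := fun o => o.elim p₀ fun p => p.1.1
      have hq : ∀ o, q o ∈ R := by rintro (_ | p); exacts [hp₀, p.1.2]
      obtain ⟨y, hy⟩ := exists_forall_norm_sub_le_of_fintype (s := fun o => (q o).1)
        (x := fun o => (q o).2) hα (fun i j => hR _ (hq i) _ (hq j)) v
      exact ⟨y, by simpa [q, dist_eq_norm] using hy none,
        mem_iInter₂.2 fun p hp => by simpa [q, ball, dist_eq_norm] using hy (some ⟨p, hp⟩)⟩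
  exact ⟨y, fun p hp => by simpa [ball, dist_eq_norm] using mem_iInter.1 hy ⟨p, hp⟩⟩

theorem exists_extension [FiniteDimensional ℝ G] (hα : 0 ≤ α) (hR : LipschitzRel α R) :
    ∃ f : F → G, (∀ v w, ‖f v - f w‖ ≤ α * ‖v - w‖) ∧ ∀ p ∈ R, f p.1 = p.2 := by
  obtain ⟨M, hRM, hM, hmax⟩ : ∃ M, R ⊆ M ∧ Maximal (fun M => LipschitzRel α M) M :=
    zorn_subset_nonempty {M | LipschitzRel α M}
      (fun C hC hchain _ => ⟨⋃₀ C, sUnion hchain hC, fun _ => subset_sUnion_of_mem⟩) R hR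
  have htotal : ∀ v, ∃ y, (v, y) ∈ M := fun v => by
    obtain ⟨y, hy⟩ := hM.exists_forall_norm_sub_le hα v
    exact ⟨y, hmax (hM.insert hy) (subset_insert _ _) (mem_insert _ _)⟩
  choose f hf using htotal
  have hfM : ∀ p ∈ M, f p.1 = p.2 := fun p hp => by
    simpa [sub_eq_zero] using hM _ (hf p.1) _ hp
  exact ⟨f, fun v w => hM _ (hf v) _ (hf w), fun p hp => hfM p (hRM hp)⟩

end LipschitzRel

end Kirszbraun

theorem Submodule.infDist_eq_norm_sub_starProjection {𝕜 F : Type*} [RCLike 𝕜]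
    [NormedAddCommGroup F] [InnerProductSpace 𝕜 F] (K : Submodule 𝕜 F)
    [K.HasOrthogonalProjection] (z : F) : infDist z K = ‖z - K.starProjection z‖ := by
  rw [infDist_eq_iInf, Submodule.starProjection_minimal]
  simp_rw [dist_eq_norm]
  rfl

theorem mem_badCone_iff {n : ℕ} {V : Submodule ℝ (E n)} {α : ℝ} {z : E n} :
    z ∈ badCone V α ↔ α * ‖V.orthogonalProjectionOnto z‖ < ‖Vᗮ.orthogonalProjectionOnto z‖ := by
  rw [badCone, mem_ofPred_eq, V.infDist_eq_norm_sub_starProjection,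
    Vᗮ.infDist_eq_norm_sub_starProjection, Submodule.starProjection_orthogonal_val, sub_sub_cancel,
    ← Submodule.starProjection_orthogonal_val, Submodule.starProjection_apply,
    Submodule.starProjection_apply, Submodule.coe_norm, Submodule.coe_norm]

theorem mem_graphOf_iff {n : ℕ} {V : Submodule ℝ (E n)} {f : V → Vᗮ} {x : E n} :
    x ∈ graphOf V f ↔ f (V.orthogonalProjectionOnto x) = Vᗮ.orthogonalProjectionOnto x := by
  constructor
  · rintro ⟨v, rfl⟩
    simp [Submodule.orthogonalProjectionOnto_apply_of_mem_orthogonal (f v).2,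
      Submodule.orthogonalProjectionOnto_orthogonal_apply_eq_zero v.2]
  · intro h
    exact ⟨V.orthogonalProjectionOnto x, by
      rw [h, ← Submodule.starProjection_apply, ← Submodule.starProjection_apply,
        Submodule.starProjection_add_starProjection_orthogonal]⟩

theorem statement0_general {n : ℕ} (V : Submodule ℝ (E n)) (α : ℝ) (hα : 0 ≤ α) (A : Set (E n)) :
    (∃ f : V → Vᗮ, LipBound V α f ∧ A ⊆ graphOf V f) ↔
      ∀ x ∈ A, A ∩ badConeAt V α x = ∅ := by
  set P := V.orthogonalProjectionOnto
  set Q := Vᗮ.orthogonalProjectionOnto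
  have hcone : (∀ x ∈ A, A ∩ badConeAt V α x = ∅) ↔
      ∀ x ∈ A, ∀ y ∈ A, ‖Q y - Q x‖ ≤ α * ‖P y - P x‖ := by
    simp only [eq_empty_iff_forall_notMem, mem_inter_iff, badConeAt, mem_ofPred_eq,
      mem_badCone_iff, map_sub, not_and, not_lt, P, Q]
  rw [hcone]
  constructor
  · rintro ⟨f, hf, hA⟩ x hx y hy
    rw [← mem_graphOf_iff.1 (hA hx), ← mem_graphOf_iff.1 (hA hy), ← dist_eq_norm,
      ← dist_eq_norm]
    exact hf _ _
  · intro h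
    obtain ⟨f, hf, hfA⟩ := LipschitzRel.exists_extension (R := (fun a => (P a, Q a)) '' A) hα
      (by rintro _ ⟨x, hx, rfl⟩ _ ⟨y, hy, rfl⟩; exact h y hy x hx)
    exact ⟨f, fun v w => by simpa only [dist_eq_norm] using hf v w,
      fun a ha => mem_graphOf_iff.2 (hfA _ (mem_image_of_mem _ ha))⟩

theorem statement0 {n m : ℕ} (hn : 2 ≤ n) (hm : 1 ≤ m) (hmn : m ≤ n - 1)
    (V : Submodule ℝ (E n)) (hV : Module.finrank ℝ V = m)
    (α : ℝ) (hα : 0 ≤ α) (A : Set (E n)) (hA : A.Nonempty) :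
    (∃ f : V → Vᗮ, LipBound V α f ∧ A ⊆ graphOf V f) ↔
      ∀ x ∈ A, A ∩ badConeAt V α x = ∅ :=
  statement0_general V α hα A
end
end

section
/- Let 1 ≤ m ≤ n−1, let V be an m-dimensional linear subspace of ℝⁿ, let α ∈ (0,∞), and let X = X(V,α). For every dyadic cube Q in ℝⁿ, setting r = 81·√n·max(α,1/α)·side Q, the following holds: if R is a dyadic cube with side R = side Q such that R intersects X_Q ∩ B̄(x_Q, r) \ U(x_Q, r/3), then R ∩ B̄(x_Q, r/4) = ∅ and gap(R, ℝⁿ \ X_x(V,α/2)) ≥ diam Q for every x ∈ Q, where X_x(V,α/2) = x + X(V,α/2). -/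
open MeasureTheory Metric Set
open scoped ENNReal NNReal

noncomputable section

/-!
Let `A = diam Q`, `M = max(α, 1/α)` and `r = 81·M·A`. A point `z ∈ R` of the annulus has
`|z - x_Q| ≥ r/3`, while all of `R` lies within `A` of `z`; since `r/12 > A`, `R` misses
`B̄(x_Q, r/4)`. Moreover `u = z - x'` lies in `X(V,α)` for some `x' ∈ Q` and `|u| ≥ (27M - 1)A`.
Inside `X(V,α)` one has `|u| ≤ (1 + 1/α)·dist(u,V)`, so `dist(u,V) ≥ 3(2 + α)A`. If `w` were
within `A` of `R` and `x ∈ Q`, then `|(w - x) - u| ≤ 3A`, and a perturbation of size `e` with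
`(2 + α)e ≤ dist(u,V)` keeps a point of `X(V,α)` inside `X(V,α/2)`; so `w ∈ X_x(V,α/2)`.
-/

section OrthogonalDecomposition

variable {F : Type*} [NormedAddCommGroup F] [InnerProductSpace ℝ F]
  (K : Submodule ℝ F) [K.HasOrthogonalProjection]

theorem infDist_eq_norm_sub_starProjection (u : F) :
    infDist u K = ‖u - K.starProjection u‖ := by
  rw [infDist_eq_iInf, Submodule.starProjection_minimal]
  simp_rw [dist_eq_norm]
  rfl

theorem infDist_orthogonal_eq_norm_starProjection (u : F) :
    infDist u Kᗮ = ‖K.starProjection u‖ := by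
  rw [infDist_eq_norm_sub_starProjection, Submodule.starProjection_orthogonal_val, sub_sub_cancel]

theorem norm_le_infDist_add_infDist_orthogonal (u : F) :
    ‖u‖ ≤ infDist u K + infDist u Kᗮ := by
  rw [infDist_eq_norm_sub_starProjection, infDist_orthogonal_eq_norm_starProjection]
  simpa using norm_add_le (u - K.starProjection u) (K.starProjection u)

end OrthogonalDecomposition

theorem one_le_max_self_inv {α : ℝ} (hα : 0 < α) : 1 ≤ max α α⁻¹ := by
  rcases le_total 1 α with h | h
  · exact le_max_of_le_left h
  · exact le_max_of_le_right (one_le_inv₀ hα |>.mpr h)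

theorem three_mul_two_add_mul_one_add_inv_le {α : ℝ} (hα : 0 < α) :
    3 * (2 + α) * (1 + α⁻¹) ≤ 27 * max α α⁻¹ - 1 := by
  have hexpand : 3 * (2 + α) * (1 + α⁻¹) = 9 + 3 * α + 6 * α⁻¹ := by
    field_simp
    ring
  linarith [one_le_max_self_inv hα, le_max_left α α⁻¹, le_max_right α α⁻¹]

section BadCone

variable {n : ℕ} {V : Submodule ℝ (E n)} {α : ℝ}

theorem ne_zero_of_mem_badCone {u : E n} (hu : u ∈ badCone V α) : n ≠ 0 := by
  rintro rfl
  have hu0 : u = 0 := Subsingleton.elim u 0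
  simp [hu0, badCone, infDist_zero_of_mem V.zero_mem, infDist_zero_of_mem Vᗮ.zero_mem] at hu

theorem norm_le_of_mem_badCone (hα : 0 < α) {u : E n} (hu : u ∈ badCone V α) :
    ‖u‖ ≤ (1 + α⁻¹) * infDist u V := by
  have hperp : infDist u Vᗮ ≤ α⁻¹ * infDist u V := by
    rw [le_inv_mul_iff₀ hα]
    exact hu.le
  linarith [norm_le_infDist_add_infDist_orthogonal V u]

theorem mem_badCone_half_of_dist_le (hα : 0 ≤ α) {u v : E n} (hu : u ∈ badCone V α)
    (hvu : (2 + α) * dist v u ≤ infDist u V) : v ∈ badCone V (α / 2) := by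
  have hperp : infDist v Vᗮ ≤ infDist u Vᗮ + dist v u := infDist_le_infDist_add_dist
  have hpar : infDist u V ≤ infDist v V + dist u v := infDist_le_infDist_add_dist
  have hu' : α * infDist u Vᗮ < infDist u V := hu
  show α / 2 * infDist v Vᗮ < infDist v V
  rw [dist_comm] at hpar
  nlinarith [mul_le_mul_of_nonneg_left hperp hα]

end BadCone

namespace DyadicCube

variable {n : ℕ}

theorem side_pos (Q : DyadicCube n) : 0 < Q.side := zpow_pos two_pos _

theorem diam_nonneg (Q : DyadicCube n) : 0 ≤ Q.diam :=
  mul_nonneg (Real.sqrt_nonneg _) Q.side_pos.le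

theorem diam_pos (hn : n ≠ 0) (Q : DyadicCube n) : 0 < Q.diam :=
  mul_pos (Real.sqrt_pos.mpr (Nat.cast_pos.mpr (Nat.pos_of_ne_zero hn))) Q.side_pos

theorem center_mem (Q : DyadicCube n) : Q.center ∈ Q.toSet := by
  intro i
  have hc : Q.center i = ((Q.j i : ℝ) + 1 / 2) * Q.side := rfl
  rw [hc]
  constructor <;> nlinarith [Q.side_pos]

theorem dist_le_diam (Q : DyadicCube n) {x y : E n} (hx : x ∈ Q.toSet) (hy : y ∈ Q.toSet) :
    dist x y ≤ Q.diam := by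
  have hcoord : ∀ i, dist (x i) (y i) ^ 2 ≤ Q.side ^ 2 := fun i => by
    rw [Real.dist_eq, sq_abs]
    apply sq_le_sq' <;> nlinarith [hx i, hy i]
  calc dist x y = Real.sqrt (∑ i, dist (x i) (y i) ^ 2) := EuclideanSpace.dist_eq x y
    _ ≤ Real.sqrt (∑ _i : Fin n, Q.side ^ 2) :=
        Real.sqrt_le_sqrt (Finset.sum_le_sum fun i _ => hcoord i)
    _ = Q.diam := by
        rw [Finset.sum_const, Finset.card_univ, Fintype.card_fin, nsmul_eq_mul,
          Real.sqrt_mul n.cast_nonneg, Real.sqrt_sq Q.side_pos.le, diam]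

theorem diam_eq_of_side_eq {Q R : DyadicCube n} (h : R.side = Q.side) : R.diam = Q.diam := by
  rw [diam, diam, h]

end DyadicCube

theorem coneRadius_eq {n : ℕ} (α : ℝ) (Q : DyadicCube n) :
    coneRadius α Q = 81 * max α α⁻¹ * Q.diam := by
  rw [coneRadius, DyadicCube.diam]
  ring

theorem ofReal_le_gap {n : ℕ} {S T : Set (E n)} {d : ℝ} (h : ∀ s ∈ S, ∀ t ∈ T, d ≤ dist s t) :
    ENNReal.ofReal d ≤ gap S T :=
  le_iInf fun s => le_iInf fun t => by
    rw [edist_dist]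
    exact ENNReal.ofReal_le_ofReal (h s s.2 t t.2)

section ConicalAnnulus

variable {n : ℕ} {V : Submodule ℝ (E n)} {α : ℝ} {Q R : DyadicCube n} {x x' y z w : E n}

theorem exists_sub_mem_badCone_of_mem_conAnnulus (hz : z ∈ conAnnulus V α Q) :
    ∃ x' ∈ Q.toSet, z - x' ∈ badCone V α ∧ coneRadius α Q / 3 ≤ dist z Q.center := by
  obtain ⟨⟨hzX, -⟩, hzU⟩ := hz
  obtain ⟨x', hx', hzx'⟩ := mem_iUnion₂.mp hzX
  exact ⟨x', hx', hzx', not_lt.mp fun h => hzU (mem_ball.mpr h)⟩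

theorem inter_closedBall_quarter_eq_empty (hα : 0 < α) (hn : n ≠ 0) (hside : R.side = Q.side)
    (hzR : z ∈ R.toSet) (hz : coneRadius α Q / 3 ≤ dist z Q.center) :
    R.toSet ∩ closedBall Q.center (coneRadius α Q / 4) = ∅ := by
  refine eq_empty_iff_forall_notMem.mpr fun y ⟨hyR, hyB⟩ => ?_
  have hzy : dist z y ≤ Q.diam := DyadicCube.diam_eq_of_side_eq hside ▸ R.dist_le_diam hzR hyR
  have hdiam : Q.diam ≤ max α α⁻¹ * Q.diam :=
    le_mul_of_one_le_left (Q.diam_pos hn).le (one_le_max_self_inv hα)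
  rw [mem_closedBall] at hyB
  rw [coneRadius_eq] at hz hyB
  linarith [dist_triangle z y Q.center, Q.diam_pos hn]

theorem diam_le_dist_of_notMem_badConeAt (hα : 0 < α) (hside : R.side = Q.side)
    (hzR : z ∈ R.toSet) (hx' : x' ∈ Q.toSet) (hu : z - x' ∈ badCone V α)
    (hz : coneRadius α Q / 3 ≤ dist z Q.center) (hx : x ∈ Q.toSet) (hy : y ∈ R.toSet)
    (hw : w ∉ badConeAt V (α / 2) x) : Q.diam ≤ dist y w := by
  by_contra! hyw
  refine hw (show w - x ∈ badCone V (α / 2) from ?_)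
  have hfar : (27 * max α α⁻¹ - 1) * Q.diam ≤ ‖z - x'‖ := by
    rw [← dist_eq_norm]
    rw [coneRadius_eq] at hz
    linarith [dist_triangle z x' Q.center, Q.dist_le_diam hx' Q.center_mem]
  have hclose : dist (w - x) (z - x') ≤ 3 * Q.diam := by
    rw [dist_eq_norm, show w - x - (z - x') = (w - y) + (y - z) + (x' - x) by abel]
    refine norm_add₃_le.trans ?_
    simp only [← dist_eq_norm]
    linarith [dist_comm w y, DyadicCube.diam_eq_of_side_eq hside ▸ R.dist_le_diam hy hzR, Q.dist_le_diam hx' hx]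
  have hinv : 0 < 1 + α⁻¹ := by positivity
  refine mem_badCone_half_of_dist_le hα.le hu (le_of_mul_le_mul_left ?_ hinv)
  calc (1 + α⁻¹) * ((2 + α) * dist (w - x) (z - x'))
      ≤ (1 + α⁻¹) * ((2 + α) * (3 * Q.diam)) := by gcongr
    _ = 3 * (2 + α) * (1 + α⁻¹) * Q.diam := by ring
    _ ≤ (27 * max α α⁻¹ - 1) * Q.diam :=
        mul_le_mul_of_nonneg_right (three_mul_two_add_mul_one_add_inv_le hα) Q.diam_nonneg
    _ ≤ (1 + α⁻¹) * infDist (z - x') V := hfar.trans (norm_le_of_mem_badCone hα hu)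

end ConicalAnnulus

theorem statement1_general {n : ℕ} (V : Submodule ℝ (E n))
    (α : ℝ) (hα : 0 < α) (Q R : DyadicCube n) (hside : R.side = Q.side)
    (hR : (R.toSet ∩ conAnnulus V α Q).Nonempty) :
    R.toSet ∩ closedBall Q.center (coneRadius α Q / 4) = ∅ ∧
      ∀ x ∈ Q.toSet,
        ENNReal.ofReal Q.diam ≤ gap R.toSet (badConeAt V (α / 2) x)ᶜ := by
  obtain ⟨z, hzR, hzA⟩ := hR
  obtain ⟨x', hx', hu, hz⟩ := exists_sub_mem_badCone_of_mem_conAnnulus hzA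
  refine ⟨inter_closedBall_quarter_eq_empty hα (ne_zero_of_mem_badCone hu) hside hzR hz,
    fun x hx => ofReal_le_gap fun y hy w hw =>
      diam_le_dist_of_notMem_badConeAt hα hside hzR hx' hu hz hx hy hw⟩

theorem statement1 {n m : ℕ} (hm : 1 ≤ m) (hmn : m ≤ n - 1)
    (V : Submodule ℝ (E n)) (hV : Module.finrank ℝ V = m)
    (α : ℝ) (hα : 0 < α) (Q R : DyadicCube n) (hside : R.side = Q.side)
    (hR : (R.toSet ∩ conAnnulus V α Q).Nonempty) :
    R.toSet ∩ closedBall Q.center (coneRadius α Q / 4) = ∅ ∧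
      ∀ x ∈ Q.toSet,
        ENNReal.ofReal Q.diam ≤ gap R.toSet (badConeAt V (α / 2) x)ᶜ :=
  statement1_general V α hα Q R hside hR
end
end

section
/- Let 1 ≤ m ≤ n−1 be integers and let μ be a Radon measure on ℝⁿ. Then there exists a unique pair of Radon measures (μ_G, μ_G⊥) such that μ = μ_G + μ_G⊥, μ_G is carried by m-dimensional Lipschitz graphs, and μ_G⊥ is singular to m-dimensional Lipschitz graphs. -/
open MeasureTheory Metric Set
open scoped ENNReal NNReal

noncomputable section

/-!
Replace `μ` by an equivalent finite measure `ν`. The supremum of `ν` over countable unions of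
Lipschitz graphs is attained by some such union `A`, and maximality forces every Lipschitz graph
to be `μ`-null outside `A`; then `μ_G = μ|A` and `μ_G⊥ = μ|Aᶜ`. If `μ = p₁ + p₂` is another
decomposition with `p₁` carried by a union `B` of graphs, then `B \ A` is `μ`-null, so `p₁` is
concentrated on `A` while `p₂` vanishes on `A`, which pins down `p₁ = μ|A` and `p₂ = μ|Aᶜ`.
-/

namespace MeasureTheory

variable {α : Type*} [MeasurableSpace α] {𝒢 : Set (Set α)}

theorem exists_countable_subset_measure_sdiff_sUnion_eq_zero (ν : Measure α) [IsFiniteMeasure ν]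
    (h𝒢 : ∀ G ∈ 𝒢, MeasurableSet G) :
    ∃ 𝒞 ⊆ 𝒢, 𝒞.Countable ∧ ∀ G ∈ 𝒢, ν (G \ ⋃₀ 𝒞) = 0 := by
  set S : Set ℝ≥0∞ := (fun 𝒞 => ν (⋃₀ 𝒞)) '' {𝒞 | 𝒞 ⊆ 𝒢 ∧ 𝒞.Countable}
  have hS : S.Nonempty := ⟨_, ∅, ⟨empty_subset _, countable_empty⟩, rfl⟩
  obtain ⟨u, -, hu, hmem⟩ := exists_seq_tendsto_sSup hS (OrderTop.bddAbove S)
  choose 𝒞 h𝒞 hν𝒞 using hmem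
  have h𝒞𝒢 : (⋃ k, 𝒞 k) ⊆ 𝒢 := iUnion_subset fun k => (h𝒞 k).1
  have h𝒞c : (⋃ k, 𝒞 k).Countable := countable_iUnion fun k => (h𝒞 k).2
  refine ⟨⋃ k, 𝒞 k, h𝒞𝒢, h𝒞c, fun G hG => ?_⟩
  set A := ⋃₀ ⋃ k, 𝒞 k
  have hA : MeasurableSet A := .sUnion h𝒞c fun s hs => h𝒢 s (h𝒞𝒢 hs)
  -- `A` attains the supremum of `ν` over countable unions from `𝒢`, so adding `G` gains nothing.
  have hGA : ν (G ∪ A) ∈ S :=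
    ⟨insert G (⋃ k, 𝒞 k), ⟨insert_subset hG h𝒞𝒢, h𝒞c.insert G⟩, congrArg ν (sUnion_insert G _)⟩
  have hmax : ν (G ∪ A) ≤ ν A := by
    refine (le_sSup hGA).trans ?_
    refine le_of_tendsto' hu fun k => ?_
    rw [← hν𝒞 k]
    exact measure_mono (sUnion_mono (subset_iUnion 𝒞 k))
  rw [← union_sdiff_right,
    measure_sdiff subset_union_right hA.nullMeasurableSet (measure_ne_top ν A)]
  exact tsub_eq_zero_of_le hmax

theorem exists_seq_measure_sdiff_iUnion_eq_zero (μ : Measure α) [SFinite μ]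
    (h𝒢 : ∀ G ∈ 𝒢, MeasurableSet G) (hne : 𝒢.Nonempty) :
    ∃ Γ : ℕ → Set α, (∀ i, Γ i ∈ 𝒢) ∧ ∀ G ∈ 𝒢, μ (G \ ⋃ i, Γ i) = 0 := by
  obtain ⟨ν, _, hμν, -⟩ := exists_isFiniteMeasure_absolutelyContinuous μ
  obtain ⟨𝒞, h𝒞𝒢, h𝒞c, hν⟩ := exists_countable_subset_measure_sdiff_sUnion_eq_zero ν h𝒢
  obtain ⟨G₀, hG₀⟩ := hne
  obtain ⟨Γ, hΓ⟩ := (h𝒞c.insert G₀).exists_eq_range (insert_nonempty G₀ 𝒞)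
  refine ⟨Γ, fun i => insert_subset hG₀ h𝒞𝒢 (hΓ ▸ mem_range_self i), fun G hG => hμν ?_⟩
  refine measure_mono_null (sdiff_subset_sdiff_right ?_) (hν G hG)
  rw [← sUnion_range, ← hΓ]
  exact sUnion_mono (subset_insert G₀ 𝒞)

theorem Measure.eq_restrict_of_add_eq {μ p₁ p₂ : Measure α} (hμ : μ = p₁ + p₂) {B : Set α}
    (h₁ : p₁ Bᶜ = 0) (h₂ : p₂ B = 0) :
    p₁ = μ.restrict B ∧ p₂ = μ.restrict Bᶜ := by
  have h₁' : p₂ Bᶜᶜ = 0 := by rwa [compl_compl]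
  subst hμ
  rw [Measure.restrict_add, Measure.restrict_add, Measure.restrict_eq_zero.2 h₂,
    Measure.restrict_eq_zero.2 h₁, Measure.restrict_eq_self_of_ae_mem (mem_ae_iff.2 h₁),
    Measure.restrict_eq_self_of_ae_mem (s := Bᶜ) (mem_ae_iff.2 h₁')]
  simp

theorem existsUnique_add_eq_carried_singular (μ : Measure α) [SFinite μ]
    (h𝒢 : ∀ G ∈ 𝒢, MeasurableSet G) (hne : 𝒢.Nonempty) :
    ∃! p : Measure α × Measure α, μ = p.1 + p.2 ∧
      (∃ Γ : ℕ → Set α, (∀ i, Γ i ∈ 𝒢) ∧ p.1 (univ \ ⋃ i, Γ i) = 0) ∧ ∀ G ∈ 𝒢, p.2 G = 0 := by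
  obtain ⟨Γ, hΓ𝒢, hΓ⟩ := exists_seq_measure_sdiff_iUnion_eq_zero μ h𝒢 hne
  set A := ⋃ i, Γ i
  have hA : MeasurableSet A := .iUnion fun i => h𝒢 _ (hΓ𝒢 i)
  refine ⟨(μ.restrict A, μ.restrict Aᶜ), ⟨(Measure.restrict_add_restrict_compl hA).symm,
    ⟨Γ, hΓ𝒢, ?_⟩, fun G hG => ?_⟩, ?_⟩
  · rw [← compl_eq_univ_sdiff, Measure.restrict_apply hA.compl, compl_inter_self, measure_empty]
  · rw [Measure.restrict_apply' hA.compl, ← sdiff_eq, hΓ G hG]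
  rintro ⟨p₁, p₂⟩ ⟨hμ, ⟨Γ', hΓ'𝒢, hp₁⟩, hp₂⟩
  set B := ⋃ i, Γ' i
  have hBA : μ (B \ A) = 0 := by
    rw [iUnion_sdiff]
    exact measure_iUnion_null fun i => hΓ _ (hΓ'𝒢 i)
  have h₁ : p₁ Aᶜ = 0 := by
    have hp₁μ : p₁ ≤ μ := hμ ▸ Measure.le_add_right le_rfl
    refine measure_mono_null (fun x hx => ?_)
      (measure_union_null hp₁ (Measure.absolutelyContinuous_of_le hp₁μ hBA))
    by_cases hxB : x ∈ B
    exacts [Or.inr ⟨hxB, hx⟩, Or.inl ⟨mem_univ x, hxB⟩]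
  have h₂ : p₂ A = 0 := measure_iUnion_null fun i => hp₂ _ (hΓ𝒢 i)
  obtain ⟨rfl, rfl⟩ := Measure.eq_restrict_of_add_eq hμ h₁ h₂
  rfl

end MeasureTheory

theorem LipBound.continuous {n : ℕ} {V : Submodule ℝ (E n)} {L : ℝ} {f : V → Vᗮ}
    (hf : LipBound V L f) : Continuous f :=
  (LipschitzWith.of_dist_le' hf).continuous

theorem graphOf_eq_setOf {n : ℕ} (V : Submodule ℝ (E n)) (f : V → Vᗮ) :
    graphOf V f =
      {x | x = (V.orthogonalProjectionOnto x : E n) + f (V.orthogonalProjectionOnto x)} := by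
  ext x
  refine ⟨?_, fun hx => ⟨_, hx⟩⟩
  rintro ⟨v, rfl⟩
  rw [mem_ofPred_eq, map_add, V.orthogonalProjectionOnto_mem_subspace_eq_self,
    V.orthogonalProjectionOnto_apply_of_mem_orthogonal (f v).2, add_zero]

theorem IsLipGraph.isClosed {n m : ℕ} {Γ : Set (E n)} (h : IsLipGraph n m Γ) : IsClosed Γ := by
  obtain ⟨V, f, L, -, -, hf, rfl⟩ := h
  rw [graphOf_eq_setOf]
  have hfc := hf.continuous
  exact isClosed_eq continuous_id (by fun_prop)

theorem exists_isLipGraph {n m : ℕ} (hmn : m ≤ n) : ∃ Γ, IsLipGraph n m Γ := by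
  have hli := (EuclideanSpace.basisFun (Fin n) ℝ).toBasis.linearIndependent.comp _
    (Fin.castLE_injective hmn)
  exact ⟨_, Submodule.span ℝ (range _), fun _ => 0, 0,
    by rw [finrank_span_eq_card hli, Fintype.card_fin], le_rfl,
    fun _ _ => by rw [dist_self, zero_mul], rfl⟩

theorem statement12_general {n m : ℕ} (hmn : m ≤ n - 1)
    (μ : Measure (E n)) [IsLocallyFiniteMeasure μ] :
    ∃! p : Measure (E n) × Measure (E n),
      μ = p.1 + p.2 ∧ IsLocallyFiniteMeasure p.1 ∧ IsLocallyFiniteMeasure p.2 ∧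
        CarriedByGraphs n m p.1 ∧ SingularToGraphs n m p.2 := by
  obtain ⟨p, ⟨hμ, hcarried, hsingular⟩, huniq⟩ :=
    existsUnique_add_eq_carried_singular μ (fun _ hΓ => (IsLipGraph.isClosed hΓ).measurableSet)
      (exists_isLipGraph (hmn.trans (Nat.sub_le n 1)))
  have hp₁ : p.1 ≤ μ := hμ ▸ Measure.le_add_right le_rfl
  have hp₂ : p.2 ≤ μ := hμ ▸ Measure.le_add_left le_rfl
  exact ⟨p, ⟨hμ, Measure.isLocallyFiniteMeasure_of_le hp₁,
    Measure.isLocallyFiniteMeasure_of_le hp₂, hcarried, hsingular⟩,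
    fun q ⟨hq, _, _, hqc, hqs⟩ => huniq q ⟨hq, hqc, hqs⟩⟩

theorem statement12 {n m : ℕ} (hm : 1 ≤ m) (hmn : m ≤ n - 1)
    (μ : Measure (E n)) [IsLocallyFiniteMeasure μ] :
    ∃! p : Measure (E n) × Measure (E n),
      μ = p.1 + p.2 ∧ IsLocallyFiniteMeasure p.1 ∧ IsLocallyFiniteMeasure p.2 ∧
        CarriedByGraphs n m p.1 ∧ SingularToGraphs n m p.2 :=
  statement12_general hmn μ

end
end
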